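/- The function h : 2^{X,Y,Z,U} → ℝ≥0 obtained as follows is a polymatroid but the conditional function W ↦ h(W∪{U}) − h({U}) restricted to subsets of {X,Y,Z} is not entropic: let h be the entropy of the mixture where U is uniform on {0,1}, and conditioned on U=0 the variables (X,Y,Z) are distributed as the parity distribution (uniform on triples in {0,1}³ with X⊕Y⊕Z=0), and conditioned on U=1 as an independent copy pair giving entropy 2·(parity entropy). Then the conditional entropy function satisfies h(W|U) = (3/2)·h_parity(W) for all W ⊆ {X,Y,Z}, and (3/2)·h_parity is not entropic. -/

import Mathlib

/-- Shannon entropy (base 2) of the pushforward of `p` along `f`. -/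
noncomputable def mEntropy {Ω α : Type*} [Fintype Ω] [DecidableEq α]
    (p : Ω → ℝ) (f : Ω → α) : ℝ :=
  ∑ a ∈ Finset.univ.image f,
    Real.negMulLog (∑ ω ∈ Finset.univ.filter (fun ω => f ω = a), p ω) / Real.log 2

/-- The entropy function of joint random variables `X` under the distribution `p`. -/
noncomputable def entFn {V Ω D : Type*} [Fintype V] [DecidableEq V] [Fintype Ω]
    [DecidableEq D] (p : Ω → ℝ) (X : V → Ω → D) (S : Finset V) : ℝ :=
  mEntropy p (fun ω => fun v : {v // v ∈ S} => X v.1 ω)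

/-- `g` is entropic if it is the entropy function of a joint distribution of
finitely-valued random variables indexed by `V`. -/
def IsEntropic {V : Type*} [Fintype V] [DecidableEq V] (g : Finset V → ℝ) : Prop :=
  ∃ (m : ℕ) (p : Fin m → ℝ) (X : V → Fin m → ℕ),
    (∀ i, 0 ≤ p i) ∧ (∑ i, p i = 1) ∧ ∀ S, g S = entFn p X S

/-- A polymatroid: non-negative, zero on `∅`, monotone and submodular. -/
def IsPolymatroid {V : Type*} [DecidableEq V] (h : Finset V → ℝ) : Prop :=
  h ∅ = 0 ∧ (∀ X, 0 ≤ h X) ∧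
    (∀ X Y : Finset V, h X ≤ h (X ∪ Y)) ∧
    (∀ X Y : Finset V, h (X ∪ Y) + h (X ∩ Y) ≤ h X + h Y)

/-- The parity entropy function on three variables. -/
def hparity : Finset (Fin 3) → ℝ := fun S => if S = ∅ then 0 else if S.card = 1 then 1 else 2

/-- The `i`-th solution of `x ⊕ y ⊕ z = 0`, as a tuple over `Fin 3`. -/
def parityTuple (i : Fin 4) (j : Fin 3) : ℕ :=
  if j = 0 then i.val / 2 else if j = 1 then i.val % 2 else (i.val / 2 + i.val % 2) % 2

/-- The mixture distribution: `U = 0` (the `inl` branch, total mass `1/2`) yields the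
parity distribution on `(X,Y,Z)`; `U = 1` (the `inr` branch, total mass `1/2`) yields the
domain product of two independent copies of the parity distribution. -/
noncomputable def mixP : (Fin 4 ⊕ Fin 4 × Fin 4) → ℝ :=
  Sum.elim (fun _ => 1 / 8) (fun _ => 1 / 32)

/-- The four random variables `X, Y, Z` (indices `0,1,2`) and `U` (index `3`) of the
mixture: on the `inr` branch the triple `(X,Y,Z)` carries a pair of parity tuples,
encoded injectively as `2*a + b`. -/
def mixX : Fin 4 → (Fin 4 ⊕ Fin 4 × Fin 4) → ℕ := fun v ω =>
  if hv : (v : ℕ) < 3 then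
    Sum.elim (fun a => parityTuple a ⟨v, hv⟩)
      (fun ab => 2 * parityTuple ab.1 ⟨v, hv⟩ + parityTuple ab.2 ⟨v, hv⟩) ω
  else Sum.elim (fun _ => 0) (fun _ => 1) ω

/-!
Entropy functions satisfy the Shannon inequalities: submodularity is the nonnegativity of the
conditional mutual information `I(x; y | z)`, which is a sum of `klFun` terms comparing the law of
`(x, y, z)` with the coupling that makes `x` and `y` conditionally independent given `z`. Hence `h`
is a polymatroid.

Every fibre of `(X_W, U)` lies in one branch of the mixture; with `r = h_parity(W)` it has
`2^(2 - r)` points of mass `1/8` on the branch `U = 0` and `4^(2 - r)` points of mass `1/32` on the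
branch `U = 1`, so `h(W ∪ {U}) = (1 + r)/2 + (1 + 2r)/2 = h(U) + (3/2) r`.

If `c · h_parity` is the entropy function of `(X, Y, Z)`, the three variables are pairwise
independent and any two of them determine the third. At an atom `(a, b, z)` this gives
`P(X = a) P(Z = z) = P(X = a, Y = b, Z = z) = P(Y = b) P(Z = z)`, and by independence of `X` and
`Y` every pair of values of positive probability occurs in an atom. So `X` is uniform on its
support, `c = log₂ n` for the size `n` of that support, and `2^(3/2)` is not an integer.
-/

open Finset Real InformationTheory

section Entropy

variable {Ω α β γ : Type*} [Fintype Ω] [DecidableEq α] [DecidableEq β] [DecidableEq γ]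
  {p : Ω → ℝ}

noncomputable def fiberMass (p : Ω → ℝ) (f : Ω → α) (a : α) : ℝ := ∑ ω with f ω = a, p ω

/-- Shannon entropy in nats of the law of `f`; `mEntropy` is the same quantity in bits. -/
noncomputable def entropy (p : Ω → ℝ) (f : Ω → α) : ℝ :=
  ∑ a ∈ univ.image f, negMulLog (fiberMass p f a)

lemma mEntropy_eq_entropy_div (p : Ω → ℝ) (f : Ω → α) : mEntropy p f = entropy p f / log 2 := by
  simp only [mEntropy, entropy, fiberMass, sum_div]

lemma fiberMass_nonneg (hp : ∀ ω, 0 ≤ p ω) (f : Ω → α) (a : α) : 0 ≤ fiberMass p f a :=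
  sum_nonneg fun ω _ => hp ω

lemma le_fiberMass (hp : ∀ ω, 0 ≤ p ω) (f : Ω → α) (ω : Ω) : p ω ≤ fiberMass p f (f ω) :=
  single_le_sum (fun ω _ => hp ω) (by simp)

lemma fiberMass_le_fiberMass_comp (hp : ∀ ω, 0 ≤ p ω) (f : Ω → α) (e : α → β) (a : α) :
    fiberMass p f a ≤ fiberMass p (fun ω => e (f ω)) (e a) :=
  sum_le_sum_of_subset_of_nonneg (fun ω => by simp +contextual) fun ω _ _ => hp ω

lemma sum_fiberMass_mul (p : Ω → ℝ) (f : Ω → α) {T : Finset α} (hT : univ.image f ⊆ T)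
    (G : α → ℝ) : ∑ a ∈ T, fiberMass p f a * G a = ∑ ω, p ω * G (f ω) := by
  rw [← sum_fiberwise_of_maps_to (g := f) fun ω _ => hT (mem_image_of_mem f (mem_univ ω))]
  refine sum_congr rfl fun a _ => ?_
  rw [fiberMass, sum_mul]
  exact sum_congr rfl fun ω hω => by rw [(mem_filter.1 hω).2]

lemma sum_fiberMass (p : Ω → ℝ) (f : Ω → α) {T : Finset α} (hT : univ.image f ⊆ T) :
    ∑ a ∈ T, fiberMass p f a = ∑ ω, p ω := by
  simpa using sum_fiberMass_mul p f hT 1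

lemma fiberMass_le_one (hp : ∀ ω, 0 ≤ p ω) (hs : ∑ ω, p ω = 1) (f : Ω → α) (a : α) :
    fiberMass p f a ≤ 1 :=
  hs ▸ sum_le_sum_of_subset_of_nonneg (filter_subset _ _) fun ω _ _ => hp ω

lemma sum_fiberMass_pair (p : Ω → ℝ) (x : Ω → α) (z : Ω → γ) {T : Finset α}
    (hT : univ.image x ⊆ T) (c : γ) :
    ∑ a ∈ T, fiberMass p (fun ω => (x ω, z ω)) (a, c) = fiberMass p z c := by
  rw [fiberMass,
    ← sum_fiberwise_of_maps_to (g := x) fun ω _ => hT (mem_image_of_mem x (mem_univ ω))]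
  refine sum_congr rfl fun a _ => ?_
  rw [fiberMass, filter_filter]
  exact sum_congr (filter_congr fun ω _ => by simp [and_comm]) fun _ _ => rfl

lemma fiberMass_apply_eq_card_mul {f : Ω → α} {ω : Ω} (h : ∀ ω', f ω' = f ω → p ω' = p ω) :
    fiberMass p f (f ω) = #{ω' | f ω' = f ω} * p ω := by
  rw [fiberMass, sum_congr rfl fun ω' hω' => h ω' (mem_filter.1 hω').2, sum_const, nsmul_eq_mul]

lemma entropy_eq_sum (p : Ω → ℝ) (f : Ω → α) :
    entropy p f = ∑ ω, p ω * -log (fiberMass p f (f ω)) := by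
  rw [entropy, ← sum_fiberMass_mul p f subset_rfl fun a => -log (fiberMass p f a)]
  simp only [negMulLog, neg_mul, mul_neg]

lemma entropy_congr {f : Ω → α} {g : Ω → β} (h : ∀ ω ω', f ω = f ω' ↔ g ω = g ω') :
    entropy p f = entropy p g := by
  simp only [entropy_eq_sum, fiberMass]
  exact sum_congr rfl fun ω _ => by rw [filter_congr fun ω' _ => h ω' ω]

lemma entropy_nonneg (hp : ∀ ω, 0 ≤ p ω) (hs : ∑ ω, p ω = 1) (f : Ω → α) : 0 ≤ entropy p f :=
  sum_nonneg fun a _ => negMulLog_nonneg (fiberMass_nonneg hp f a) (fiberMass_le_one hp hs f a)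

lemma entropy_eq_zero_of_const (hs : ∑ ω, p ω = 1) {f : Ω → α} (hf : ∀ ω ω', f ω = f ω') :
    entropy p f = 0 := by
  refine (entropy_eq_sum p f).trans (sum_eq_zero fun ω _ => ?_)
  rw [fiberMass, filter_true_of_mem fun ω' _ => hf ω' ω, hs, log_one, neg_zero, mul_zero]

lemma mul_neg_log_fiberMass_comp_le (hp : ∀ ω, 0 ≤ p ω) (f : Ω → α) (e : α → β) (ω : Ω) :
    p ω * -log (fiberMass p (fun ω => e (f ω)) (e (f ω))) ≤ p ω * -log (fiberMass p f (f ω)) := by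
  rcases (hp ω).eq_or_lt with h0 | hpos
  · simp [← h0]
  · exact mul_le_mul_of_nonneg_left (neg_le_neg (log_le_log (hpos.trans_le (le_fiberMass hp f ω))
      (fiberMass_le_fiberMass_comp hp f e _))) hpos.le

lemma entropy_comp_le (hp : ∀ ω, 0 ≤ p ω) (f : Ω → α) (e : α → β) :
    entropy p (fun ω => e (f ω)) ≤ entropy p f := by
  simp only [entropy_eq_sum]
  exact sum_le_sum fun ω _ => mul_neg_log_fiberMass_comp_le hp f e ω

lemma fiberMass_comp_eq_of_entropy_comp_eq (hp : ∀ ω, 0 ≤ p ω) {f : Ω → α} {e : α → β}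
    (h : entropy p (fun ω => e (f ω)) = entropy p f) {ω : Ω} (hω : 0 < p ω) :
    fiberMass p (fun ω => e (f ω)) (e (f ω)) = fiberMass p f (f ω) := by
  simp only [entropy_eq_sum] at h
  have hterm := (sum_eq_sum_iff_of_le fun ω _ => mul_neg_log_fiberMass_comp_le hp f e ω).1 h ω
    (mem_univ ω)
  have hf : 0 < fiberMass p f (f ω) := hω.trans_le (le_fiberMass hp f ω)
  have hef : 0 < fiberMass p (fun ω => e (f ω)) (e (f ω)) := hω.trans_le (le_fiberMass hp _ ω)
  exact log_injOn_pos hef hf (by simpa [hω.ne'] using hterm)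

lemma mul_log_div_eq_mul_klFun {P Q : ℝ} (h : Q = 0 → P = 0) :
    P * log (P / Q) = Q * klFun (P / Q) + P - Q := by
  rcases eq_or_ne Q 0 with rfl | hQ
  · simp [h rfl]
  · rw [klFun_apply]
    field_simp
    ring

/-- The law of `(x, y, z)` obtained by making `x` and `y` conditionally independent given `z`. -/
noncomputable def condIndepMass (p : Ω → ℝ) (x : Ω → α) (y : Ω → β) (z : Ω → γ)
    (t : α × β × γ) : ℝ :=
  fiberMass p (fun ω => (x ω, z ω)) (t.1, t.2.2) * fiberMass p (fun ω => (y ω, z ω)) (t.2.1, t.2.2)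
    / fiberMass p z t.2.2

noncomputable def condMutualInfo (p : Ω → ℝ) (x : Ω → α) (y : Ω → β) (z : Ω → γ) : ℝ :=
  entropy p (fun ω => (x ω, z ω)) + entropy p (fun ω => (y ω, z ω))
    - entropy p (fun ω => (x ω, y ω, z ω)) - entropy p z

section CondMutualInfo

variable (x : Ω → α) (y : Ω → β) (z : Ω → γ)

lemma sum_condIndepMass (hs : ∑ ω, p ω = 1) :
    ∑ t ∈ univ.image x ×ˢ univ.image y ×ˢ univ.image z, condIndepMass p x y z t = 1 := by
  rw [sum_product, sum_comm, sum_product, sum_comm, ← hs, ← sum_fiberMass p z subset_rfl]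
  refine sum_congr rfl fun c _ => ?_
  simp only [condIndepMass]
  calc _ = (∑ a ∈ univ.image x, fiberMass p (fun ω => (x ω, z ω)) (a, c)) *
        (∑ b ∈ univ.image y, fiberMass p (fun ω => (y ω, z ω)) (b, c)) / fiberMass p z c := by
        rw [sum_mul_sum, sum_div, sum_comm]
        simp only [sum_div]
    _ = fiberMass p z c := by
        rw [sum_fiberMass_pair p x z subset_rfl, sum_fiberMass_pair p y z subset_rfl,
          mul_self_div_self]

lemma fiberMass_eq_zero_of_condIndepMass_eq_zero (hp : ∀ ω, 0 ≤ p ω) {t : α × β × γ}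
    (ht : condIndepMass p x y z t = 0) : fiberMass p (fun ω => (x ω, y ω, z ω)) t = 0 := by
  refine le_antisymm ?_ (fiberMass_nonneg hp _ t)
  simp only [condIndepMass, div_eq_zero_iff, mul_eq_zero] at ht
  rcases ht with (h | h) | h <;> rw [← h]
  · exact fiberMass_le_fiberMass_comp hp _ (fun t => (t.1, t.2.2)) t
  · exact fiberMass_le_fiberMass_comp hp _ (fun t => (t.2.1, t.2.2)) t
  · exact fiberMass_le_fiberMass_comp hp _ (fun t => t.2.2) t

lemma condMutualInfo_eq_sum_klFun (hp : ∀ ω, 0 ≤ p ω) (hs : ∑ ω, p ω = 1) :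
    condMutualInfo p x y z = ∑ t ∈ univ.image x ×ˢ univ.image y ×ˢ univ.image z,
      condIndepMass p x y z t *
        klFun (fiberMass p (fun ω => (x ω, y ω, z ω)) t / condIndepMass p x y z t) := by
  set T := univ.image x ×ˢ univ.image y ×ˢ univ.image z
  set P := fiberMass p (fun ω => (x ω, y ω, z ω))
  set Q := condIndepMass p x y z
  have hT : univ.image (fun ω => (x ω, y ω, z ω)) ⊆ T := by
    intro t ht
    obtain ⟨ω, -, rfl⟩ := mem_image.1 ht
    simp [T]
  have hI : condMutualInfo p x y z = ∑ t ∈ T, P t * log (P t / Q t) := by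
    rw [sum_fiberMass_mul p _ hT fun t => log (P t / Q t), condMutualInfo]
    simp only [entropy_eq_sum, ← sum_add_distrib, ← sum_sub_distrib]
    refine sum_congr rfl fun ω _ => ?_
    rcases (hp ω).eq_or_lt with h0 | hpos
    · simp [← h0]
    have hxyz := hpos.trans_le (le_fiberMass hp (fun ω => (x ω, y ω, z ω)) ω)
    have hxz := hpos.trans_le (le_fiberMass hp (fun ω => (x ω, z ω)) ω)
    have hyz := hpos.trans_le (le_fiberMass hp (fun ω => (y ω, z ω)) ω)
    have hz := hpos.trans_le (le_fiberMass hp z ω)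
    simp only [P, Q, condIndepMass]
    rw [log_div hxyz.ne' (div_pos (mul_pos hxz hyz) hz).ne', log_div (mul_pos hxz hyz).ne' hz.ne',
      log_mul hxz.ne' hyz.ne']
    ring
  rw [hI, sum_congr rfl fun t _ =>
      mul_log_div_eq_mul_klFun (fiberMass_eq_zero_of_condIndepMass_eq_zero x y z hp),
    sum_sub_distrib, sum_add_distrib, sum_fiberMass p _ hT, sum_condIndepMass x y z hs, hs,
    add_sub_cancel_right]

lemma condIndepMass_nonneg (hp : ∀ ω, 0 ≤ p ω) (t : α × β × γ) : 0 ≤ condIndepMass p x y z t :=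
  div_nonneg (mul_nonneg (fiberMass_nonneg hp _ _) (fiberMass_nonneg hp _ _))
    (fiberMass_nonneg hp _ _)

lemma condMutualInfo_nonneg (hp : ∀ ω, 0 ≤ p ω) (hs : ∑ ω, p ω = 1) :
    0 ≤ condMutualInfo p x y z := by
  rw [condMutualInfo_eq_sum_klFun x y z hp hs]
  exact sum_nonneg fun t _ => mul_nonneg (condIndepMass_nonneg x y z hp t)
    (klFun_nonneg (div_nonneg (fiberMass_nonneg hp _ t) (condIndepMass_nonneg x y z hp t)))

lemma fiberMass_eq_condIndepMass (hp : ∀ ω, 0 ≤ p ω) (hs : ∑ ω, p ω = 1)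
    (h : condMutualInfo p x y z = 0) {t : α × β × γ}
    (ht : t ∈ univ.image x ×ˢ univ.image y ×ˢ univ.image z) :
    fiberMass p (fun ω => (x ω, y ω, z ω)) t = condIndepMass p x y z t := by
  rw [condMutualInfo_eq_sum_klFun x y z hp hs] at h
  have hP := fiberMass_nonneg hp (fun ω => (x ω, y ω, z ω)) t
  have hQ := condIndepMass_nonneg x y z hp t
  have hterm := (sum_eq_zero_iff_of_nonneg fun t _ => mul_nonneg (condIndepMass_nonneg x y z hp t)
    (klFun_nonneg (div_nonneg (fiberMass_nonneg hp _ t) (condIndepMass_nonneg x y z hp t)))).1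
    h t ht
  rcases hQ.eq_or_lt with hQ0 | hQpos
  · rw [← hQ0]
    exact fiberMass_eq_zero_of_condIndepMass_eq_zero x y z hp hQ0.symm
  · rw [mul_eq_zero, klFun_eq_zero_iff (div_nonneg hP hQ), div_eq_one_iff_eq hQpos.ne'] at hterm
    exact hterm.resolve_left hQpos.ne'

lemma fiberMass_pair_eq_mul_of_entropy_eq_add (hp : ∀ ω, 0 ≤ p ω) (hs : ∑ ω, p ω = 1)
    (h : entropy p (fun ω => (x ω, y ω)) = entropy p x + entropy p y) {a : α} {b : β}
    (ha : a ∈ univ.image x) (hb : b ∈ univ.image y) :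
    fiberMass p (fun ω => (x ω, y ω)) (a, b) = fiberMass p x a * fiberMass p y b := by
  have hI : condMutualInfo p x y (fun _ => ()) = 0 := by
    have hx : entropy p (fun ω => (x ω, ())) = entropy p x := entropy_congr fun _ _ => by simp
    have hy : entropy p (fun ω => (y ω, ())) = entropy p y := entropy_congr fun _ _ => by simp
    have hxy : entropy p (fun ω => (x ω, y ω, ())) = entropy p (fun ω => (x ω, y ω)) :=
      entropy_congr fun _ _ => by simp
    rw [condMutualInfo, entropy_eq_zero_of_const (f := fun _ : Ω => ()) hs fun _ _ => rfl, hx, hy,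
      hxy, h]
    ring
  obtain ⟨ω, -, -⟩ := mem_image.1 ha
  have : Nonempty Ω := ⟨ω⟩
  have := fiberMass_eq_condIndepMass x y (fun _ => ()) hp hs hI (t := (a, b, ()))
    (by simp [ha, hb])
  simpa [condIndepMass, fiberMass, hs] using this

end CondMutualInfo

lemma entropy_eq_log_card_of_fiberMass_eq (hs : ∑ ω, p ω = 1) {f : Ω → α} {q : ℝ}
    (h : ∀ a ∈ univ.image f, fiberMass p f a ≠ 0 → fiberMass p f a = q) :
    entropy p f = log #{a ∈ univ.image f | fiberMass p f a ≠ 0} := by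
  set S := {a ∈ univ.image f | fiberMass p f a ≠ 0}
  have hS : ∀ a ∈ S, fiberMass p f a = q := fun a ha => h a (mem_filter.1 ha).1 (mem_filter.1 ha).2
  have hcard : (#S : ℝ) * q = 1 := by
    rw [← hs, ← sum_fiberMass p f subset_rfl, ← sum_filter_ne_zero, sum_congr rfl hS, sum_const,
      nsmul_eq_mul]
  have hent : entropy p f = #S * negMulLog q := by
    rw [entropy, ← sum_filter_of_ne (p := fun a => fiberMass p f a ≠ 0)
        fun a _ h0 ha => h0 (by rw [ha, negMulLog_zero]),
      sum_congr rfl fun a ha => by rw [hS a ha], sum_const, nsmul_eq_mul]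
  have hS0 : (#S : ℝ) ≠ 0 := left_ne_zero_of_mul_eq_one hcard
  rw [hent, negMulLog, eq_inv_of_mul_eq_one_right hcard, log_inv]
  field_simp

lemma fiberMass_eq_of_indep_of_determines (hp : ∀ ω, 0 ≤ p ω) (hs : ∑ ω, p ω = 1)
    {x : Ω → α} {y : Ω → β} {z : Ω → γ}
    (hxy : entropy p (fun ω => (x ω, y ω)) = entropy p x + entropy p y)
    (hxz : entropy p (fun ω => (x ω, z ω)) = entropy p x + entropy p z)
    (hyz : entropy p (fun ω => (y ω, z ω)) = entropy p y + entropy p z)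
    (hxz_det : entropy p (fun ω => (x ω, z ω)) = entropy p (fun ω => (x ω, y ω, z ω)))
    (hyz_det : entropy p (fun ω => (y ω, z ω)) = entropy p (fun ω => (x ω, y ω, z ω)))
    {a : α} {b : β} (ha : a ∈ univ.image x) (hb : b ∈ univ.image y)
    (ha0 : fiberMass p x a ≠ 0) (hb0 : fiberMass p y b ≠ 0) :
    fiberMass p x a = fiberMass p y b := by
  have hpair := fiberMass_pair_eq_mul_of_entropy_eq_add x y hp hs hxy ha hb
  obtain ⟨ω, hωab, hω0⟩ := exists_ne_zero_of_sum_ne_zero (s := {ω | (x ω, y ω) = (a, b)})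
    (by rw [← fiberMass, hpair]; exact mul_ne_zero ha0 hb0)
  obtain ⟨rfl, rfl⟩ := Prod.mk.inj (mem_filter.1 hωab).2
  have hpos : 0 < p ω := (hp ω).lt_of_ne' hω0
  have hz : 0 < fiberMass p z (z ω) := hpos.trans_le (le_fiberMass hp z ω)
  have hx := mem_image_of_mem x (mem_univ ω)
  have hy := mem_image_of_mem y (mem_univ ω)
  have hz' := mem_image_of_mem z (mem_univ ω)
  refine mul_right_cancel₀ hz.ne' ?_
  rw [← fiberMass_pair_eq_mul_of_entropy_eq_add x z hp hs hxz hx hz',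
    ← fiberMass_pair_eq_mul_of_entropy_eq_add y z hp hs hyz hy hz',
    fiberMass_comp_eq_of_entropy_comp_eq hp (f := fun ω => (x ω, y ω, z ω))
      (e := fun t => (t.1, t.2.2)) hxz_det hpos,
    fiberMass_comp_eq_of_entropy_comp_eq hp (f := fun ω => (x ω, y ω, z ω))
      (e := fun t => (t.2.1, t.2.2)) hyz_det hpos]

end Entropy

lemma hparity_eq_min_card (W : Finset (Fin 3)) : hparity W = (min #W 2 : ℕ) := by
  unfold hparity
  split_ifs with h0 h1
  · simp [h0]
  · simp [h1]
  · rw [← card_eq_zero] at h0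
    rw [show min #W 2 = 2 by omega, Nat.cast_ofNat]

section EntropyFunction

universe u

variable {V Ω β : Type*} {D : Type u} [Fintype V] [DecidableEq V] [Fintype Ω] [DecidableEq D]
  [DecidableEq β] {p : Ω → ℝ}

lemma entFn_eq_entropy_div {X : V → Ω → D} {S : Finset V} (g : Ω → β)
    (hg : ∀ ω ω', (∀ v ∈ S, X v ω = X v ω') ↔ g ω = g ω') :
    entFn p X S = entropy p g / log 2 := by
  rw [entFn, mEntropy_eq_entropy_div, entropy_congr (g := g)]
  intro ω ω'
  simp [funext_iff, hg]

lemma entropy_eq_entFn_mul_log {X : V → Ω → D} {S : Finset V} (g : Ω → β)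
    (hg : ∀ ω ω', (∀ v ∈ S, X v ω = X v ω') ↔ g ω = g ω') :
    entropy p g = entFn p X S * log 2 := by
  rw [entFn_eq_entropy_div g hg, div_mul_cancel₀ _ (log_pos one_lt_two).ne']

theorem isPolymatroid_entFn (hp : ∀ ω, 0 ≤ p ω) (hs : ∑ ω, p ω = 1) (X : V → Ω → D) :
    IsPolymatroid (entFn p X) := by
  have hlog : 0 < log 2 := log_pos one_lt_two
  let res (S : Finset V) (ω : Ω) (v : {v // v ∈ S}) : D := X v ω
  have res_eq_iff (S : Finset V) (ω ω' : Ω) : res S ω = res S ω' ↔ ∀ v ∈ S, X v ω = X v ω' := by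
    simp [res, funext_iff]
  refine ⟨?_, fun S => ?_, fun S T => ?_, fun S T => ?_⟩
  · rw [entFn_eq_entropy_div (fun _ => ()) (by simp), entropy_eq_zero_of_const hs fun _ _ => rfl,
      zero_div]
  · rw [entFn_eq_entropy_div (res S) fun ω ω' => (res_eq_iff S ω ω').symm]
    exact div_nonneg (entropy_nonneg hp hs _) hlog.le
  · rw [entFn_eq_entropy_div (res S) fun ω ω' => (res_eq_iff S ω ω').symm,
      entFn_eq_entropy_div (fun ω => (res S ω, res T ω)) fun ω ω' => by
        simp only [Prod.mk.injEq, res_eq_iff, mem_union, or_imp, forall_and]]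
    exact div_le_div_of_nonneg_right
      (entropy_comp_le hp (fun ω => (res S ω, res T ω)) Prod.fst) hlog.le
  · have hI := condMutualInfo_nonneg (res S) (res T) (res (S ∩ T)) hp hs
    rw [condMutualInfo] at hI
    rw [entFn_eq_entropy_div (fun ω => (res S ω, res T ω, res (S ∩ T) ω)) fun ω ω' => by
        simp only [Prod.mk.injEq, res_eq_iff, mem_union, mem_inter]; aesop,
      entFn_eq_entropy_div (res (S ∩ T)) fun ω ω' => (res_eq_iff _ ω ω').symm,
      entFn_eq_entropy_div (fun ω => (res S ω, res (S ∩ T) ω)) fun ω ω' => by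
        simp only [Prod.mk.injEq, res_eq_iff, mem_inter]; aesop,
      entFn_eq_entropy_div (fun ω => (res T ω, res (S ∩ T) ω)) fun ω ω' => by
        simp only [Prod.mk.injEq, res_eq_iff, mem_inter]; aesop,
      ← add_div, ← add_div, div_le_div_iff_of_pos_right hlog]
    linarith

theorem exists_eq_logb_of_entFn_eq_mul_hparity (hp : ∀ ω, 0 ≤ p ω) (hs : ∑ ω, p ω = 1)
    {X : Fin 3 → Ω → D} {c : ℝ} (h : ∀ S, c * hparity S = entFn p X S) :
    ∃ n : ℕ, c = logb 2 n := by
  have H (S : Finset (Fin 3)) {β : Type u} [DecidableEq β] (g : Ω → β)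
      (hg : ∀ ω ω', (∀ v ∈ S, X v ω = X v ω') ↔ g ω = g ω') :
      entropy p g = c * (min #S 2 : ℕ) * log 2 := by
    rw [entropy_eq_entFn_mul_log g hg, ← h, hparity_eq_min_card]
  have hx : entropy p (X 0) = c * log 2 := by simpa using H {0} (X 0) (by simp)
  have hy : entropy p (X 1) = c * log 2 := by simpa using H {1} (X 1) (by simp)
  have hz : entropy p (X 2) = c * log 2 := by simpa using H {2} (X 2) (by simp)
  have hxy : entropy p (fun ω => (X 0 ω, X 1 ω)) = c * 2 * log 2 := by
    simpa using H {0, 1} _ (by simp)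
  have hxz : entropy p (fun ω => (X 0 ω, X 2 ω)) = c * 2 * log 2 := by
    simpa using H {0, 2} _ (by simp)
  have hyz : entropy p (fun ω => (X 1 ω, X 2 ω)) = c * 2 * log 2 := by
    simpa using H {1, 2} _ (by simp)
  have hxyz : entropy p (fun ω => (X 0 ω, X 1 ω, X 2 ω)) = c * 2 * log 2 := by
    simpa using H {0, 1, 2} _ (by simp)
  obtain ⟨b, hb, hb0⟩ : ∃ b ∈ univ.image (X 1), fiberMass p (X 1) b ≠ 0 :=
    exists_ne_zero_of_sum_ne_zero (by rw [sum_fiberMass p _ subset_rfl, hs]; exact one_ne_zero)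
  have hunif := entropy_eq_log_card_of_fiberMass_eq hs fun a ha ha0 =>
    fiberMass_eq_of_indep_of_determines hp hs (z := X 2) (by rw [hxy, hx, hy]; ring)
      (by rw [hxz, hx, hz]; ring) (by rw [hyz, hy, hz]; ring) (by rw [hxz, hxyz])
      (by rw [hyz, hxyz]) ha hb ha0 hb0
  rw [hunif] at hx
  exact ⟨_, eq_div_of_mul_eq (log_pos one_lt_two).ne' hx.symm⟩

end EntropyFunction

lemma logb_two_natCast_ne_three_halves (n : ℕ) : logb 2 n ≠ 3 / 2 := by
  intro h
  rcases Nat.eq_zero_or_pos n with rfl | hn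
  · norm_num at h
  rw [logb_eq_iff_rpow_eq two_pos (by norm_num) (by exact_mod_cast hn)] at h
  have h8 : ((n ^ 2 : ℕ) : ℝ) = 8 := by
    rw [Nat.cast_pow, ← h, ← rpow_natCast, ← rpow_mul zero_le_two]
    norm_num
  have h8 : n ^ 2 = 8 := by exact_mod_cast h8
  have : n ≤ 2 := by nlinarith
  interval_cases n <;> omega

lemma mixP_nonneg (ω : Fin 4 ⊕ Fin 4 × Fin 4) : 0 ≤ mixP ω := by
  cases ω <;> norm_num [mixP]

lemma sum_mixP : ∑ ω, mixP ω = 1 := by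
  norm_num [mixP, Fintype.sum_sum_type]

lemma mixP_eq_of_mixX_three_eq {ω ω' : Fin 4 ⊕ Fin 4 × Fin 4} (h : mixX 3 ω' = mixX 3 ω) :
    mixP ω' = mixP ω := by
  cases ω <;> cases ω' <;> simp_all [mixX, mixP]

lemma card_fiber_mixX_inl : ∀ (W : Finset (Fin 3)) (a : Fin 4),
    #{ω | ∀ v ∈ W.image Fin.castSucc ∪ {3}, mixX v ω = mixX v (.inl a)} * 2 ^ min #W 2 = 4 := by
  decide

lemma card_fiber_mixX_inr : ∀ (W : Finset (Fin 3)) (ab : Fin 4 × Fin 4),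
    #{ω | ∀ v ∈ W.image Fin.castSucc ∪ {3}, mixX v ω = mixX v (.inr ab)} * 4 ^ min #W 2 = 16 := by
  decide

lemma entFn_mixX_union_three (W : Finset (Fin 3)) :
    entFn mixP mixX (W.image Fin.castSucc ∪ {3}) = 1 + 3 / 2 * hparity W := by
  set S := W.image Fin.castSucc ∪ {3}
  set f : Fin 4 ⊕ Fin 4 × Fin 4 → {v // v ∈ S} → ℕ := fun ω v => mixX v ω
  have hf (ω ω') : f ω' = f ω ↔ ∀ v ∈ S, mixX v ω' = mixX v ω := by simp [f, funext_iff]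
  have hmass (ω) : fiberMass mixP f (f ω) = #{ω' | ∀ v ∈ S, mixX v ω' = mixX v ω} * mixP ω := by
    rw [fiberMass_apply_eq_card_mul fun ω' h =>
      mixP_eq_of_mixX_three_eq ((hf ω ω').1 h 3 (by simp [S]))]
    simp only [hf]
  have hinl (a) : fiberMass mixP f (f (.inl a)) = (2 ^ (min #W 2 + 1) : ℝ)⁻¹ := by
    have hcard : (#{ω' | ∀ v ∈ S, mixX v ω' = mixX v (.inl a)} : ℝ) * 2 ^ min #W 2 = 4 := by
      exact_mod_cast card_fiber_mixX_inl W a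
    rw [hmass, mixP, Sum.elim_inl, pow_succ]
    field_simp
    linear_combination 2 * hcard
  have hinr (ab) : fiberMass mixP f (f (.inr ab)) = (2 ^ (2 * min #W 2 + 1) : ℝ)⁻¹ := by
    have hcard : (#{ω' | ∀ v ∈ S, mixX v ω' = mixX v (.inr ab)} : ℝ) * 4 ^ min #W 2 = 16 := by
      exact_mod_cast card_fiber_mixX_inr W ab
    rw [hmass, mixP, Sum.elim_inr, pow_succ, pow_mul]
    norm_num
    field_simp
    linear_combination 2 * hcard
  rw [entFn_eq_entropy_div f fun ω ω' => (hf ω' ω).symm, entropy_eq_sum, Fintype.sum_sum_type,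
    sum_congr rfl fun (a : Fin 4) _ => by rw [hinl a],
    sum_congr rfl fun (ab : Fin 4 × Fin 4) _ => by rw [hinr ab]]
  simp only [log_inv, log_pow, mixP, Sum.elim_inl, Sum.elim_inr, sum_const, card_univ,
    Fintype.card_fin, Fintype.card_prod, nsmul_eq_mul, hparity_eq_min_card]
  field_simp
  push_cast
  ring

lemma not_isEntropic_three_halves_mul_hparity :
    ¬ IsEntropic (fun W : Finset (Fin 3) => 3 / 2 * hparity W) := by
  rintro ⟨m, p, X, hp, hs, h⟩
  obtain ⟨n, hn⟩ := exists_eq_logb_of_entFn_eq_mul_hparity hp hs h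
  exact logb_two_natCast_ne_three_halves n hn.symm

/-- The entropy function `h` of the mixture is a polymatroid, its conditional version
`W ↦ h(W ∪ {U}) − h({U})` equals `(3/2)·h_parity` on subsets of `{X,Y,Z}`, yet this
conditional function is not entropic. -/
theorem conditional_entropy_not_entropic :
    IsPolymatroid (fun S : Finset (Fin 4) => entFn mixP mixX S) ∧
    (∀ W : Finset (Fin 3),
      entFn mixP mixX (W.image Fin.castSucc ∪ {3}) - entFn mixP mixX {3} =
        3 / 2 * hparity W) ∧
    ¬ IsEntropic (fun W : Finset (Fin 3) =>
        entFn mixP mixX (W.image Fin.castSucc ∪ {3}) - entFn mixP mixX {3}) ∧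
    ¬ IsEntropic (fun W : Finset (Fin 3) => 3 / 2 * hparity W) := by
  have hU : entFn mixP mixX {3} = 1 := by
    simpa [hparity] using entFn_mixX_union_three ∅
  have hcond (W : Finset (Fin 3)) :
      entFn mixP mixX (W.image Fin.castSucc ∪ {3}) - entFn mixP mixX {3} = 3 / 2 * hparity W := by
    rw [entFn_mixX_union_three, hU, add_sub_cancel_left]
  refine ⟨isPolymatroid_entFn mixP_nonneg sum_mixP mixX, hcond, ?_,
    not_isEntropic_three_halves_mul_hparity⟩
  simpa only [hcond] using not_isEntropic_three_halves_mul_hparity
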